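/- Let P = conv(v_1,...,v_s) ⊂ S = conv(0, v_1,...,v_d) as above, set H = conv(v_1,...,v_d), K_i = {x ∈ S : x_i = 0}, K = (∪_{i=1}^d K_i) \ H, and L = ∂P \ H. Define ψ: L → K by ψ(α) = α if some coordinate of α vanishes, and ψ(α) = (α_1,...,α_{d-1},0) otherwise. Then ψ is well-defined (ψ(L) ⊆ K) and injective. -/

import Mathlib

/-!
Write `φ x = ∑ j, x j / a j`, so that `S = {x ≥ 0 | φ x ≤ 1}` and `H = {x ≥ 0 | φ x = 1}`, and
`H ⊆ P ⊆ S`. Zeroing a positive coordinate lowers `φ`, whence `ψ(L) ⊆ K`. If `α ≠ β` in `L`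
have the same image, they differ only in the last coordinate `l`, say `α l < β l`, and `β` has
no vanishing coordinate (otherwise both are fixed by `ψ`). Then `β` lies strictly between `α` and
a point `γ` of `H` with positive coordinates. As `P` is convex and contains `α` together with a
neighbourhood of `γ` in `H`, it contains a neighbourhood of `β`, contradicting `β ∈ ∂P`.
-/

open Set

theorem Convex.openSegment_subset_interior_of_levelSet {E : Type*} [AddCommGroup E] [Module ℝ E]
    [TopologicalSpace E] [IsTopologicalAddGroup E] [ContinuousSMul ℝ E]
    {C O : Set E} (hC : Convex ℝ C) (hO : IsOpen O) (φ : E →L[ℝ] ℝ) {c : ℝ}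
    (hOC : O ∩ φ ⁻¹' {c} ⊆ C) {x y : E} (hx : x ∈ C) (hφx : φ x ≠ c) (hy : y ∈ O)
    (hφy : φ y = c) : openSegment ℝ x y ⊆ interior C := by
  rw [openSegment_eq_image']
  rintro _ ⟨t, ⟨ht0, ht1⟩, rfl⟩
  have hcx : c - φ x ≠ 0 := sub_ne_zero.2 hφx.symm
  set z := x + t • (y - x) with hz
  -- `τ w` is the parameter of `w` on the line from `x` towards the level set, `g w` its endpoint
  set τ : E → ℝ := fun w => (φ w - φ x) / (c - φ x)
  set g : E → E := fun w => x + (τ w)⁻¹ • (w - x)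
  have hτ : Continuous τ := by fun_prop
  have hτz : τ z = t := by
    simp only [τ, hz, map_add, map_smul, map_sub, smul_eq_mul, hφy]
    field_simp
    ring
  have hgz : g z = y := by
    change x + (τ z)⁻¹ • (z - x) = y
    rw [hτz, hz, add_sub_cancel_left, smul_smul, inv_mul_cancel₀ ht0.ne', one_smul,
      add_sub_cancel]
  have hg : ContinuousAt g z :=
    continuousAt_const.add ((hτ.continuousAt.inv₀ (hτz ▸ ht0.ne')).smul
      (continuousAt_id.sub continuousAt_const))
  rw [mem_interior_iff_mem_nhds]
  filter_upwards [hτ.continuousAt.preimage_mem_nhds (Ioo_mem_nhds (hτz ▸ ht0) (hτz ▸ ht1)),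
    hg.preimage_mem_nhds (hO.mem_nhds (hgz ▸ hy))] with w ⟨hw0, hw1⟩ hgw
  have hφg : φ (g w) = c := by
    have hwx : φ w - φ x ≠ 0 := fun h => by simp [τ, h] at hw0
    simp only [g, τ, map_add, map_smul, map_sub, smul_eq_mul]
    field_simp
    ring
  have hmem := hC.add_smul_sub_mem hx (hOC ⟨hgw, hφg⟩) ⟨hw0.le, hw1.le⟩
  simpa only [g, add_sub_cancel_left, smul_smul, mul_inv_cancel₀ hw0.ne', one_smul,
    add_sub_cancel] using hmem

theorem update_eq_add_single {ι G : Type*} [DecidableEq ι] [AddCommGroup G] (x : ι → G)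
    (l : ι) (r : G) : Function.update x l r = x + Pi.single l (r - x l) := by
  ext j
  by_cases hj : j = l
  · subst hj; simp
  · simp [hj]

variable {ι : Type*} [Fintype ι]

noncomputable def weightedSum (A : ι → ℝ) : (ι → ℝ) →L[ℝ] ℝ :=
  ∑ j, (A j)⁻¹ • ContinuousLinearMap.proj j

theorem weightedSum_apply (A x : ι → ℝ) : weightedSum A x = ∑ j, x j / A j := by
  simp [weightedSum, div_eq_inv_mul]

@[simp]
theorem weightedSum_single [DecidableEq ι] (A : ι → ℝ) (i : ι) (r : ℝ) :
    weightedSum A (Pi.single i r) = r / A i := by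
  simp [weightedSum_apply, Pi.single_apply, ite_div]

def weightedSimplex (A : ι → ℝ) : Set (ι → ℝ) := {x | 0 ≤ x ∧ weightedSum A x ≤ 1}

def weightedFace (A : ι → ℝ) : Set (ι → ℝ) := {x | 0 ≤ x ∧ weightedSum A x = 1}

theorem convex_weightedSimplex (A : ι → ℝ) : Convex ℝ (weightedSimplex A) :=
  (convex_Ici 0).inter (convex_halfSpace_le (weightedSum A).isLinear 1)

theorem convex_weightedFace (A : ι → ℝ) : Convex ℝ (weightedFace A) :=
  (convex_Ici 0).inter (convex_hyperplane (weightedSum A).isLinear 1)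

theorem weightedFace_subset_weightedSimplex (A : ι → ℝ) : weightedFace A ⊆ weightedSimplex A :=
  fun _ hx => ⟨hx.1, hx.2.le⟩

variable [DecidableEq ι]

theorem sum_div_smul_single {A : ι → ℝ} (hA : ∀ i, 0 < A i) (x : ι → ℝ) :
    ∑ j, (x j / A j) • Pi.single j (A j) = x := by
  ext i
  simp [Finset.sum_apply, Pi.single_apply, div_mul_cancel₀ _ (hA i).ne']

theorem single_mem_weightedFace {A : ι → ℝ} (hA : ∀ i, 0 < A i) (i : ι) :
    Pi.single i (A i) ∈ weightedFace A :=
  ⟨Pi.single_nonneg.2 (hA i).le, by rw [weightedSum_single, div_self (hA i).ne']⟩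

theorem convexHull_range_single {A : ι → ℝ} (hA : ∀ i, 0 < A i) :
    convexHull ℝ (range fun i => Pi.single i (A i)) = weightedFace A := by
  refine (convexHull_min (range_subset_iff.2 (single_mem_weightedFace hA))
    (convex_weightedFace A)).antisymm fun x ⟨hx0, hx1⟩ => ?_
  rw [← sum_div_smul_single hA x]
  exact (convex_convexHull ℝ _).sum_mem (fun j _ => div_nonneg (hx0 j) (hA j).le)
    (by rwa [← weightedSum_apply]) fun j _ => subset_convexHull ℝ _ (mem_range_self j)

theorem convexHull_insert_zero_range_single {A : ι → ℝ} (hA : ∀ i, 0 < A i) :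
    convexHull ℝ (insert 0 (range fun i => Pi.single i (A i))) = weightedSimplex A := by
  refine (convexHull_min (insert_subset_iff.2 ⟨show (0 : ι → ℝ) ∈ weightedSimplex A from
    ⟨le_rfl, by simp⟩,
    (range_subset_iff.2 fun i => weightedFace_subset_weightedSimplex A
      (single_mem_weightedFace hA i))⟩) (convex_weightedSimplex A)).antisymm
    fun x ⟨hx0, hx1⟩ => ?_
  let w : Option ι → ℝ := Option.elim' (1 - weightedSum A x) fun j => x j / A j
  let z : Option ι → ι → ℝ := Option.elim' 0 fun j => Pi.single j (A j)
  have hx : ∑ o, w o • z o = x := by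
    simp [w, z, Fintype.sum_option, sum_div_smul_single hA]
  rw [← hx]
  refine (convex_convexHull ℝ _).sum_mem (fun o _ => ?_) ?_ fun o _ => subset_convexHull ℝ _ ?_
  · cases o
    · simpa [w] using hx1
    · exact div_nonneg (hx0 _) (hA _).le
  · simp [w, Fintype.sum_option, weightedSum_apply]
  · cases o
    · exact mem_insert 0 _
    · exact mem_insert_of_mem 0 (mem_range_self _)

theorem mem_interior_of_eq_off_of_lt {A : ι → ℝ} (hA : ∀ i, 0 < A i) {C : Set (ι → ℝ)}
    (hC : Convex ℝ C) (hface : weightedFace A ⊆ C) {α β : ι → ℝ} {l : ι} (hα : α ∈ C)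
    (hβ : ∀ j, 0 < β j) (hβ1 : weightedSum A β < 1) (hoff : ∀ j, j ≠ l → α j = β j)
    (hl : α l < β l) : β ∈ interior C := by
  set p := β l - α l
  set c := A l * (1 - weightedSum A β)
  have hp : 0 < p := sub_pos.2 hl
  have hc : 0 < c := mul_pos (hA l) (sub_pos.2 hβ1)
  have hαβ : β = α + Pi.single l p := by
    rw [← update_eq_add_single]
    ext j
    by_cases hj : j = l
    · subst hj; simp
    · simp [hj, hoff j hj]
  -- pushing `β` further in direction `l` reaches a point `γ` of the open face
  set γ := β + Pi.single l c
  have hγ : γ ∈ univ.pi fun _ => Ioi 0 := fun j _ => by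
    by_cases hj : j = l
    · subst hj; simpa [γ] using add_pos (hβ j) hc
    · simpa [γ, hj] using hβ j
  have hφγ : weightedSum A γ = 1 := by
    simp only [γ, c, map_add, weightedSum_single, mul_div_cancel_left₀ _ (hA l).ne']
    ring
  have hφα : weightedSum A α ≠ 1 := by
    have : weightedSum A β = weightedSum A α + p / A l := by
      rw [hαβ, map_add, weightedSum_single]
    have := div_pos hp (hA l)
    linarith
  have hseg : β ∈ openSegment ℝ α γ := by
    rw [openSegment_eq_image']
    refine ⟨p / (p + c), ⟨by positivity, (div_lt_one (by positivity)).2 (by linarith)⟩, ?_⟩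
    have hγα : γ - α = Pi.single l (p + c) := by
      simp only [γ, Pi.single_add]
      rw [hαβ]
      abel
    simp only [hγα]
    rw [← Pi.single_smul', smul_eq_mul, div_mul_cancel₀ _ (by positivity), ← hαβ]
  exact hC.openSegment_subset_interior_of_levelSet
    (isOpen_set_pi finite_univ fun _ _ => isOpen_Ioi) (weightedSum A)
    (fun y ⟨hy, hφy⟩ => hface ⟨fun j => (hy j (mem_univ j)).le, hφy⟩) hα hφα hγ hφγ hseg

noncomputable def zeroOut (l : ι) (x : ι → ℝ) : ι → ℝ :=
  if ∃ i, x i = 0 then x else Function.update x l 0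

theorem zeroOut_of_exists {l : ι} {x : ι → ℝ} (h : ∃ i, x i = 0) : zeroOut l x = x :=
  if_pos h

theorem zeroOut_of_forall {l : ι} {x : ι → ℝ} (h : ∀ i, x i ≠ 0) :
    zeroOut l x = Function.update x l 0 :=
  if_neg (not_exists.2 h)

theorem zeroOut_apply_of_ne {l j : ι} (x : ι → ℝ) (h : j ≠ l) : zeroOut l x j = x j := by
  unfold zeroOut
  split_ifs <;> simp [h]

theorem mapsTo_zeroOut {A : ι → ℝ} (hA : ∀ i, 0 < A i) (l : ι) :
    MapsTo (zeroOut l) (weightedSimplex A \ weightedFace A)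
      ((⋃ i, {x ∈ weightedSimplex A | x i = 0}) \ weightedFace A) := by
  rintro x ⟨⟨hx0, hx1⟩, hxH⟩
  by_cases h : ∃ i, x i = 0
  · obtain ⟨i, hi⟩ := h
    rw [zeroOut_of_exists ⟨i, hi⟩]
    exact ⟨mem_iUnion.2 ⟨i, ⟨hx0, hx1⟩, hi⟩, hxH⟩
  push Not at h
  have hy0 : 0 ≤ Function.update x l 0 := fun j => by
    rcases eq_or_ne j l with rfl | hj
    · simp
    · simpa [hj] using hx0 j
  have hy1 : weightedSum A (Function.update x l 0) < 1 := by
    rw [update_eq_add_single, map_add, weightedSum_single, zero_sub, neg_div]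
    have := div_pos ((hx0 l).lt_of_ne (h l).symm) (hA l)
    linarith
  rw [zeroOut_of_forall h]
  exact ⟨mem_iUnion.2 ⟨l, ⟨hy0, hy1.le⟩, Function.update_self l 0 x⟩, fun hyH => hy1.ne hyH.2⟩

theorem injOn_zeroOut {A : ι → ℝ} (hA : ∀ i, 0 < A i) {C : Set (ι → ℝ)} (hC : Convex ℝ C)
    (hface : weightedFace A ⊆ C) (hCS : C ⊆ weightedSimplex A) (l : ι) :
    InjOn (zeroOut l) (C \ (interior C ∪ weightedFace A)) := by
  intro α hα β hβ h
  have hoff : ∀ j, j ≠ l → α j = β j := fun j hj => by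
    rw [← zeroOut_apply_of_ne α hj, h, zeroOut_apply_of_ne β hj]
  by_contra hne
  have hl : α l ≠ β l := fun hl => hne (funext fun j => by
    by_cases hj : j = l
    · rwa [hj]
    · exact hoff j hj)
  wlog hlt : α l < β l generalizing α β
  · exact this hβ hα h.symm (fun j hj => (hoff j hj).symm) (Ne.symm hne) (Ne.symm hl)
      (hl.lt_or_gt.resolve_left hlt)
  obtain ⟨hβ0, hβ1⟩ := hCS hβ.1
  by_cases hz : ∃ i, β i = 0
  · -- `β` is fixed by `zeroOut`, and so is `α`, since it vanishes where `β` does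
    obtain ⟨i, hi⟩ := hz
    have hα0 : 0 ≤ α l := (hCS hα.1).1 l
    have hil : i ≠ l := by
      rintro rfl
      linarith
    rw [zeroOut_of_exists ⟨i, hi⟩, zeroOut_of_exists ⟨i, (hoff i hil).trans hi⟩] at h
    exact hne h
  push Not at hz
  refine hβ.2 (Or.inl (mem_interior_of_eq_off_of_lt hA hC hface hα.1
    (fun j => (hβ0 j).lt_of_ne (hz j).symm) (hβ1.lt_of_ne fun h1 => hβ.2 (Or.inr ⟨hβ0, h1⟩))
    hoff hlt))

/-- With `P = conv(v 1, …, v s) ⊆ S = conv(0, v 1, …, v d)` (`v i = a i • e i` for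
`i ≤ d`, and `⟨v i, α₀⟩ < 1`, `v i ∈ ℕ^d` for `i > d`), set
`H = conv(v 1, …, v d)`, `K i = {x ∈ S : x i = 0}`, `K = (⋃ i, K i) \ H`, and
`L = ∂P \ H` (relative boundary).  The map `ψ : L → K` given by `ψ(α) = α` if some
coordinate of `α` vanishes and `ψ(α) = (α 1, …, α (d-1), 0)` otherwise, is
well-defined and injective. -/
theorem psi_mapsTo_and_injective (d s : ℕ) (hd : 0 < d) (hds : d ≤ s)
    (a : Fin d → ℕ) (ha : ∀ i, 0 < a i)
    (v : Fin s → (Fin d → ℝ))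
    (hv1 : ∀ i : Fin d, v (Fin.castLE hds i) = Pi.single i (a i : ℝ))
    (hvnat : ∀ i j, ∃ m : ℕ, v i j = (m : ℝ))
    (hlt : ∀ i : Fin s, d ≤ (i : ℕ) → ∑ j, v i j / (a j : ℝ) < 1)
    (P S H L K : Set (Fin d → ℝ))
    (hP : P = convexHull ℝ (Set.range v))
    (hS : S = convexHull ℝ
      (insert 0 (Set.range fun i : Fin d => v (Fin.castLE hds i))))
    (hH : H = convexHull ℝ (Set.range fun i : Fin d => v (Fin.castLE hds i)))
    (hL : L = intrinsicFrontier ℝ P \ H)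
    (hK : K = (⋃ i : Fin d, {x ∈ S | x i = 0}) \ H)
    (ψ : (Fin d → ℝ) → (Fin d → ℝ))
    (hψ : ∀ x, ψ x = if ∃ i, x i = 0 then x
      else Function.update x ⟨d - 1, by omega⟩ 0) :
    Set.MapsTo ψ L K ∧ Set.InjOn ψ L := by
  have hA : ∀ i, 0 < (a i : ℝ) := fun i => Nat.cast_pos.2 (ha i)
  have hHP : H ⊆ P := hH ▸ hP ▸ convexHull_mono (range_comp_subset_range _ v)
  have hvert : (fun i => v (Fin.castLE hds i)) = fun i => Pi.single i (a i : ℝ) := funext hv1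
  rw [hvert, convexHull_insert_zero_range_single hA] at hS
  rw [hvert, convexHull_range_single hA] at hH
  subst hS hH hK
  have hPS : P ⊆ weightedSimplex (a ·) := by
    rw [hP]
    refine convexHull_min (range_subset_iff.2 fun i => ?_) (convex_weightedSimplex _)
    by_cases hi : (i : ℕ) < d
    · rw [show i = Fin.castLE hds ⟨i, hi⟩ from rfl, hv1]
      exact weightedFace_subset_weightedSimplex _ (single_mem_weightedFace hA _)
    · refine ⟨fun j => ?_, (weightedSum_apply _ _).trans_le (hlt i (not_lt.1 hi)).le⟩
      obtain ⟨m, hm⟩ := hvnat i j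
      exact hm ▸ m.cast_nonneg
  have hLP : L ⊆ P \ (interior P ∪ weightedFace (a ·)) := by
    have hPclosed : IsClosed P := hP ▸ ((finite_range v).isCompact_convexHull (𝕜 := ℝ)).isClosed
    rw [hL]
    rintro x ⟨hxF, hxH⟩
    refine ⟨intrinsicFrontier_subset hPclosed hxF, fun hx => hx.elim ?_ hxH⟩
    exact (intrinsicFrontier_subset_frontier hxF).2
  obtain rfl : ψ = zeroOut ⟨d - 1, by omega⟩ := funext fun x => by
    rw [hψ x, zeroOut]
    -- the two `if`s decide `∃ i, x i = 0` by different (`Fin`-specific vs. `Fintype`) instances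
    congr
  exact ⟨(mapsTo_zeroOut hA _).mono (hLP.trans fun x hx => ⟨hPS hx.1, fun h => hx.2 (Or.inr h)⟩)
    subset_rfl, (injOn_zeroOut hA (hP ▸ convex_convexHull ℝ _) hHP hPS _).mono hLP⟩
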